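/- The exponentially tilted weights attain the Gibbs variational supremum: let ι be a nonempty finite type, let p : ι → ℝ be strictly positive probability weights on ι, let f : ι → ℝ, and let c > 0. Set Z = ∑_j p j * Real.exp (f j / c) and q* i = p i * Real.exp (f i / c) / Z. Then q* is a strictly positive probability weight on ι, and ∑_i q* i * f i − c * ∑_i q* i * Real.log (q* i / p i) = c * Real.log Z. -/

import Mathlib

/-!
Writing `q* i = p i * exp (f i / c) / Z`, the log-likelihood ratio `log (q* i / p i)` equals
`f i / c - log Z`; so `c` times the KL divergence is `∑ q* i * f i - c * log Z` because `q*` has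
total mass one, and the Gibbs functional collapses to `c * log Z`.
-/

open Finset Real

section
variable {ι : Type*} [Fintype ι]

lemma sum_div_sum_self {w : ι → ℝ} (hw : ∑ i, w i ≠ 0) : ∑ i, w i / ∑ j, w j = 1 := by
  rw [← Finset.sum_div, div_self hw]

lemma sum_mul_exp_pos [Nonempty ι] {p : ι → ℝ} (hp : ∀ i, 0 < p i) (g : ι → ℝ) :
    0 < ∑ j, p j * exp (g j) :=
  sum_pos (fun i _ => mul_pos (hp i) (exp_pos _)) univ_nonempty

lemma log_mul_exp_div_div_self {a Z : ℝ} (ha : 0 < a) (hZ : 0 < Z) (x : ℝ) :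
    log (a * exp x / Z / a) = x - log Z := by
  have hratio : a * exp x / Z / a = exp x / Z := by field_simp
  rw [hratio, log_div (exp_pos x).ne' hZ.ne', log_exp]

lemma sum_mul_sub_mul_sum_mul_log_div_eq {q p f : ι → ℝ} {c L : ℝ} (hc : c ≠ 0)
    (hq : ∑ i, q i = 1) (hlog : ∀ i, log (q i / p i) = f i / c - L) :
    ∑ i, q i * f i - c * ∑ i, q i * log (q i / p i) = c * L := by
  have hexpand : c * ∑ i, q i * log (q i / p i) = ∑ i, q i * f i - c * L := by
    simp only [hlog, mul_sub, sum_sub_distrib, ← sum_mul, hq, mul_div_assoc', mul_sum,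
      mul_div_cancel_left₀ _ hc]
    ring
  rw [hexpand]
  ring

end

theorem gibbs_tilted_weights_attain_general {ι : Type*} [Fintype ι] [Nonempty ι]
    (p : ι → ℝ) (hp : ∀ i, 0 < p i)
    (f : ι → ℝ) (c : ℝ) (hc : 0 < c) :
    let Z : ℝ := ∑ j, p j * Real.exp (f j / c)
    let qs : ι → ℝ := fun i => p i * Real.exp (f i / c) / Z
    (∀ i, 0 < qs i) ∧ (∑ i, qs i = 1) ∧
      (∑ i, qs i * f i - c * ∑ i, qs i * Real.log (qs i / p i) = c * Real.log Z) := by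
  intro Z qs
  have hZ : 0 < Z := sum_mul_exp_pos hp _
  have hsum : ∑ i, qs i = 1 := sum_div_sum_self hZ.ne'
  refine ⟨fun i => div_pos (mul_pos (hp i) (exp_pos _)) hZ, hsum, ?_⟩
  exact sum_mul_sub_mul_sum_mul_log_div_eq hc.ne' hsum
    fun i => log_mul_exp_div_div_self (hp i) hZ _

/-- The exponentially tilted weights `q* i = p i * exp (f i / c) / Z` form a
strictly positive probability weight and attain the Gibbs variational value
`c * Real.log Z`. -/
theorem gibbs_tilted_weights_attain {ι : Type*} [Fintype ι] [Nonempty ι]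
    (p : ι → ℝ) (hp : ∀ i, 0 < p i) (hps : ∑ i, p i = 1)
    (f : ι → ℝ) (c : ℝ) (hc : 0 < c) :
    let Z : ℝ := ∑ j, p j * Real.exp (f j / c)
    let qs : ι → ℝ := fun i => p i * Real.exp (f i / c) / Z
    (∀ i, 0 < qs i) ∧ (∑ i, qs i = 1) ∧
      (∑ i, qs i * f i - c * ∑ i, qs i * Real.log (qs i / p i) = c * Real.log Z) :=
  gibbs_tilted_weights_attain_general p hp f c hc
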